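/- Let K be a field and c ∈ ℤⁿ with c⁺ ≠ 0 and c⁻ ≠ 0. Let I ⊆ S = K[x₁,…,xₙ] be an ideal homogeneous with respect to the ℤⁿ/ℤc-grading, let ≺ and ≺' be term orders with x^{c⁺} ≺ x^{c⁻} and x^{c⁺} ≻' x^{c⁻}, set M = in_≺(I) and N = in_{≺'}(I), and let f : Mon(M) → Mon(N) be the map f(m) = max_≺ { in_{≺'}(p) : p ∈ I homogeneous with in_≺(p) = m }. If p ∈ I is a homogeneous polynomial with in_≺(p) = m and in_{≺'}(p) = m', then there exists a monomial m̃ ∈ Mon(M) with m̃ ⪯ m and f(m̃) = m'; in particular d(m̃, m') ≤ d(m, m'). -/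

import Mathlib

open MvPolynomial

/-- A term order on the monomial exponents of `K[x₁,…,xₙ]`: a strict total order on
`Fin n →₀ ℕ` with `0` smallest and compatible with addition. -/
def IsTermOrder (n : ℕ) (lt : (Fin n →₀ ℕ) → (Fin n →₀ ℕ) → Prop) : Prop :=
  (∀ u v : Fin n →₀ ℕ, lt u v ∨ u = v ∨ lt v u) ∧
  (∀ u v w : Fin n →₀ ℕ, lt u v → lt v w → lt u w) ∧
  (∀ u : Fin n →₀ ℕ, ¬ lt u u) ∧
  (∀ u : Fin n →₀ ℕ, u ≠ 0 → lt 0 u) ∧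
  (∀ u v w : Fin n →₀ ℕ, lt u v → lt (u + w) (v + w))

/-- `u` is the exponent of the `lt`-leading monomial `in_≺(f)` of `f`. -/
def IsLeadExp {n : ℕ} {K : Type*} [Field K] (lt : (Fin n →₀ ℕ) → (Fin n →₀ ℕ) → Prop)
    (f : MvPolynomial (Fin n) K) (u : Fin n →₀ ℕ) : Prop :=
  u ∈ f.support ∧ ∀ v ∈ f.support, v ≠ u → lt v u

/-- The initial ideal `in_≺(I)`, generated by the leading monomials of nonzero elements. -/
noncomputable def initialIdeal {n : ℕ} {K : Type*} [Field K]
    (lt : (Fin n →₀ ℕ) → (Fin n →₀ ℕ) → Prop) (I : Ideal (MvPolynomial (Fin n) K)) :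
    Ideal (MvPolynomial (Fin n) K) :=
  Ideal.span { p | ∃ f ∈ I, ∃ u, IsLeadExp lt f u ∧ p = monomial u 1 }

/-- `DistRel c u v ℓ` says that `u - v = ℓ·c` in `ℤⁿ`; then `d(x^u, x^v) = |ℓ|`. -/
def DistRel {n : ℕ} (c : Fin n → ℤ) (u v : Fin n →₀ ℕ) (ℓ : ℤ) : Prop :=
  ∀ i, (u i : ℤ) - (v i : ℤ) = ℓ * c i

/-- Two monomials have the same degree in the `ℤⁿ/ℤc`-grading iff `u - v ∈ ℤc`. -/
def SameDeg {n : ℕ} (c : Fin n → ℤ) (u v : Fin n →₀ ℕ) : Prop :=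
  ∃ ℓ : ℤ, DistRel c u v ℓ

/-- A polynomial is homogeneous for the `ℤⁿ/ℤc`-grading if all of its monomials
have the same degree. -/
def CHom {n : ℕ} {K : Type*} [Field K] (c : Fin n → ℤ) (f : MvPolynomial (Fin n) K) : Prop :=
  ∀ u ∈ f.support, ∀ v ∈ f.support, SameDeg c u v

/-- An ideal is homogeneous for the `ℤⁿ/ℤc`-grading if it is generated by homogeneous
elements. -/
def CHomIdeal {n : ℕ} {K : Type*} [Field K] (c : Fin n → ℤ)
    (I : Ideal (MvPolynomial (Fin n) K)) : Prop :=
  ∃ G : Set (MvPolynomial (Fin n) K), (∀ g ∈ G, CHom c g) ∧ I = Ideal.span G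

/-- The exponent vector `c⁺` of a vector `c ∈ ℤⁿ`. -/
noncomputable def cpos {n : ℕ} (c : Fin n → ℤ) : Fin n →₀ ℕ :=
  Finsupp.equivFunOnFinite.symm fun i => (c i).toNat

/-- The exponent vector `c⁻` of a vector `c ∈ ℤⁿ`. -/
noncomputable def cneg {n : ℕ} (c : Fin n → ℤ) : Fin n →₀ ℕ :=
  Finsupp.equivFunOnFinite.symm fun i => (-(c i)).toNat

/-- `Mon M`: the set of (exponents of) monomials lying in `M`. -/
def Mon {n : ℕ} {K : Type*} [Field K] (M : Ideal (MvPolynomial (Fin n) K)) :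
    Set (Fin n →₀ ℕ) :=
  { u | monomial u 1 ∈ M }

/-- `f` (as a map on exponent vectors) restricts to an arrow map `Mon M → Mon N`
with respect to the `ℤⁿ/ℤc`-grading and the term order `lt`:
(1) it is a degree-preserving bijection with `m ⪰ f(m)`;
(2) `d(m', f(m')) ≤ d(m, f(m))` for every multiple `m'` of `m ∈ Mon M`;
(3) `d(f⁻¹(m'), m') ≤ d(f⁻¹(m), m)` for every `m ∈ Mon N` and multiple `m'` of `m`. -/
def IsArrowMap {n : ℕ} {K : Type*} [Field K] (c : Fin n → ℤ)
    (lt : (Fin n →₀ ℕ) → (Fin n →₀ ℕ) → Prop)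
    (M N : Ideal (MvPolynomial (Fin n) K)) (f : (Fin n →₀ ℕ) → (Fin n →₀ ℕ)) : Prop :=
  Set.BijOn f (Mon M) (Mon N) ∧
  (∀ u ∈ Mon M, SameDeg c u (f u)) ∧
  (∀ u ∈ Mon M, f u = u ∨ lt (f u) u) ∧
  (∀ u ∈ Mon M, ∀ (w : Fin n →₀ ℕ) (ℓ ℓ' : ℤ),
    DistRel c u (f u) ℓ → DistRel c (u + w) (f (u + w)) ℓ' → |ℓ'| ≤ |ℓ|) ∧
  (∀ u ∈ Mon M, ∀ u' ∈ Mon M, ∀ (w : Fin n →₀ ℕ) (ℓ ℓ' : ℤ),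
    f u' = f u + w → DistRel c u (f u) ℓ → DistRel c u' (f u') ℓ' → |ℓ'| ≤ |ℓ|)

/-- `OppLead c lt lt' I u v`: there is a homogeneous `p ∈ I` with `in_≺(p) = x^u` and
`in_≺'(p) = x^v`. -/
def OppLead {n : ℕ} {K : Type*} [Field K] (c : Fin n → ℤ)
    (lt lt' : (Fin n →₀ ℕ) → (Fin n →₀ ℕ) → Prop)
    (I : Ideal (MvPolynomial (Fin n) K)) (u v : Fin n →₀ ℕ) : Prop :=
  ∃ p ∈ I, CHom c p ∧ IsLeadExp lt p u ∧ IsLeadExp lt' p v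

/-- `v = max_≺ { in_≺'(p) : p ∈ I homogeneous with in_≺(p) = x^u }`. -/
def MaxOppLead {n : ℕ} {K : Type*} [Field K] (c : Fin n → ℤ)
    (lt lt' : (Fin n →₀ ℕ) → (Fin n →₀ ℕ) → Prop)
    (I : Ideal (MvPolynomial (Fin n) K)) (u v : Fin n →₀ ℕ) : Prop :=
  OppLead c lt lt' I u v ∧ ∀ v', OppLead c lt lt' I u v' → v' = v ∨ lt v' v

/-! Within a graded component `a + ℤc`, a term order with `x^{c⁺} ≺ x^{c⁻}` is determined by the
sign of `ℓ` in `a - b = ℓc`, and `≺'` is its reverse there. If `f(u) ≠ v`, take `q` realising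
`f(u)` and cancel the `≺`-leading terms: `r = q_u p - p_u q` is homogeneous, keeps `v` as its
`≺'`-leading exponent (every term of `q` is `⪯' f(u) ≺' v`), and has a strictly smaller `≺`-leading
exponent `u₁`. Since `u ⪯' v`, the exponent `ℓ ≤ 0` of `u - v = ℓc` strictly increases along this
descent, which therefore stops at some `ũ` with `f(ũ) = v`; the same sign bookkeeping gives
`d(ũ, v) ≤ d(u, v)`. -/

namespace IsTermOrder

variable {n : ℕ} {lt : (Fin n →₀ ℕ) → (Fin n →₀ ℕ) → Prop}

theorem irrefl (h : IsTermOrder n lt) (a : Fin n →₀ ℕ) : ¬ lt a a := h.2.2.1 a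

theorem trans (h : IsTermOrder n lt) {a b d : Fin n →₀ ℕ} : lt a b → lt b d → lt a d :=
  h.2.1 a b d

theorem asymm (h : IsTermOrder n lt) {a b : Fin n →₀ ℕ} (hab : lt a b) : ¬ lt b a :=
  fun hba => h.irrefl a (h.trans hab hba)

theorem add_lt_add_right (h : IsTermOrder n lt) {a b : Fin n →₀ ℕ} (hab : lt a b)
    (w : Fin n →₀ ℕ) : lt (a + w) (b + w) :=
  h.2.2.2.2 a b w hab

theorem add_lt_add_left (h : IsTermOrder n lt) {a b : Fin n →₀ ℕ} (hab : lt a b)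
    (w : Fin n →₀ ℕ) : lt (w + a) (w + b) := by
  simpa only [add_comm w] using h.add_lt_add_right hab w

theorem lt_of_add_lt_add_right (h : IsTermOrder n lt) {a b w : Fin n →₀ ℕ}
    (hw : lt (a + w) (b + w)) : lt a b := by
  rcases h.1 a b with hab | rfl | hba
  · exact hab
  · exact absurd hw (h.irrefl _)
  · exact absurd (h.add_lt_add_right hba w) (h.asymm hw)

theorem nsmul_lt_nsmul (h : IsTermOrder n lt) {a b : Fin n →₀ ℕ} (hab : lt a b) :
    ∀ {k : ℕ}, k ≠ 0 → lt (k • a) (k • b)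
  | 0, hk => absurd rfl hk
  | 1, _ => by simpa only [one_smul] using hab
  | k + 2, _ => by
    rw [succ_nsmul a (k + 1), succ_nsmul b (k + 1)]
    exact h.trans (h.add_lt_add_right (h.nsmul_lt_nsmul hab k.succ_ne_zero) a)
      (h.add_lt_add_left hab _)

theorem lt_of_add_nsmul_eq (h : IsTermOrder n lt) {x y a b : Fin n →₀ ℕ} {k : ℕ}
    (hxy : lt x y) (hk : k ≠ 0) (e : a + k • y = b + k • x) : lt a b := by
  have := h.add_lt_add_left (h.nsmul_lt_nsmul hxy hk) a
  rw [e] at this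
  exact h.lt_of_add_lt_add_right this

theorem exists_isLeadExp {K : Type*} [Field K] (h : IsTermOrder n lt)
    {p : MvPolynomial (Fin n) K} (hp : p ≠ 0) : ∃ u, IsLeadExp lt p u := by
  let _ : IsStrictOrder _ lt := { irrefl := h.irrefl, trans := fun _ _ _ => h.trans }
  obtain ⟨u, hu, hmax⟩ :=
    @Finset.exists_maximal _ (partialOrderOfSO lt).toLE
      (@instIsTransLe _ (partialOrderOfSO lt).toPreorder) _ (support_nonempty.2 hp)
  refine ⟨u, hu, fun w hw hwu => ?_⟩
  rcases h.1 w u with hlt | rfl | hgt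
  · exact hlt
  · exact absurd rfl hwu
  · exact ((hmax hw (Or.inr hgt)).resolve_left hwu)

end IsTermOrder

section Grading

variable {n : ℕ} {c : Fin n → ℤ} {a b w : Fin n →₀ ℕ} {ℓ ℓ' : ℤ}

theorem DistRel.symm (hd : DistRel c a b ℓ) : DistRel c b a (-ℓ) :=
  fun i => by linear_combination -hd i

theorem DistRel.sub (ha : DistRel c a w ℓ) (hb : DistRel c b w ℓ') : DistRel c a b (ℓ - ℓ') :=
  fun i => by linear_combination ha i - hb i

theorem DistRel.neg (hd : DistRel c a b ℓ) : DistRel (-c) b a ℓ :=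
  fun i => by simp only [Pi.neg_apply]; linear_combination -hd i

theorem DistRel.eq_of_zero (hd : DistRel c a b 0) : a = b := by
  ext i
  have := hd i
  omega

theorem DistRel.add_nsmul_eq {k : ℕ} (hd : DistRel c a b k) :
    a + k • cneg c = b + k • cpos c := by
  ext i
  have := hd i
  simp only [Finsupp.add_apply, Finsupp.smul_apply, smul_eq_mul, cpos, cneg,
    Finsupp.equivFunOnFinite_symm_apply_apply]
  zify
  rw [Int.toNat_eq_max, Int.toNat_eq_max]
  rcases le_total 0 (c i) with hc | hc
  · rw [max_eq_right (neg_nonpos.2 hc), max_eq_left hc]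
    linear_combination this
  · rw [max_eq_left (neg_nonneg.2 hc), max_eq_right hc]
    linear_combination this

theorem SameDeg.trans (hab : SameDeg c a b) (hbw : SameDeg c b w) : SameDeg c a w :=
  let ⟨ℓ, hd⟩ := hab
  let ⟨ℓ', hd'⟩ := hbw
  ⟨ℓ + ℓ', fun i => by linear_combination hd i + hd' i⟩

theorem cpos_neg : cpos (-c) = cneg c := rfl

theorem cneg_neg : cneg (-c) = cpos c := by
  ext i
  simp [cpos, cneg]

end Grading

namespace IsTermOrder

variable {n : ℕ} {lt : (Fin n →₀ ℕ) → (Fin n →₀ ℕ) → Prop} {c : Fin n → ℤ}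
  {a b : Fin n →₀ ℕ} {ℓ : ℤ}

theorem pos_iff_lt_of_distRel (h : IsTermOrder n lt) (hc : lt (cpos c) (cneg c))
    (hd : DistRel c a b ℓ) : 0 < ℓ ↔ lt a b := by
  have pos : ∀ {a b : Fin n →₀ ℕ} {ℓ : ℤ}, DistRel c a b ℓ → 0 < ℓ → lt a b := by
    intro a b ℓ hd hℓ
    lift ℓ to ℕ using hℓ.le
    exact h.lt_of_add_nsmul_eq hc (by omega) hd.add_nsmul_eq
  refine ⟨pos hd, fun hab => ?_⟩
  by_contra! hℓ
  rcases hℓ.lt_or_eq with hneg | rfl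
  · exact h.asymm hab (pos hd.symm (neg_pos.2 hneg))
  · exact h.irrefl a (hd.eq_of_zero ▸ hab)

theorem pos_iff_gt_of_distRel (h : IsTermOrder n lt) (hc : lt (cneg c) (cpos c))
    (hd : DistRel c a b ℓ) : 0 < ℓ ↔ lt b a :=
  h.pos_iff_lt_of_distRel (c := -c) (by rwa [cpos_neg, cneg_neg]) hd.neg

end IsTermOrder

section Polynomial

variable {n : ℕ} {K : Type*} [Field K] {lt : (Fin n →₀ ℕ) → (Fin n →₀ ℕ) → Prop}
  {c : Fin n → ℤ} {p q : MvPolynomial (Fin n) K} {u w : Fin n →₀ ℕ}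

theorem IsLeadExp.eq_or_lt (hp : IsLeadExp lt p u) (hw : w ∈ p.support) : w = u ∨ lt w u :=
  (eq_or_ne w u).imp_right (hp.2 w hw)

theorem IsLeadExp.not_lt (h : IsTermOrder n lt) (hp : IsLeadExp lt p u) (hw : w ∈ p.support) :
    ¬ lt u w := by
  rcases hp.eq_or_lt hw with rfl | hwu
  exacts [h.irrefl w, h.asymm hwu]

theorem IsLeadExp.smul (hp : IsLeadExp lt p u) {a : K} (ha : a ≠ 0) : IsLeadExp lt (a • p) u := by
  simpa only [IsLeadExp, support_smul_eq ha] using hp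

theorem IsLeadExp.sub_of_forall_lt (h : IsTermOrder n lt) (hp : IsLeadExp lt p u)
    (hq : ∀ w ∈ q.support, lt w u) : IsLeadExp lt (p - q) u := by
  classical
  have hu : q.coeff u = 0 := notMem_support_iff.1 fun hu => h.irrefl u (hq u hu)
  refine ⟨?_, fun w hw hwu => ?_⟩
  · rw [mem_support_iff, coeff_sub, hu, sub_zero]
    exact mem_support_iff.1 hp.1
  · rcases Finset.mem_union.1 (support_sub _ p q hw) with hw | hw
    exacts [hp.2 w hw hwu, hq w hw]

theorem IsLeadExp.lt_of_mem_support_cancel (hp : IsLeadExp lt p u) (hq : IsLeadExp lt q u)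
    (hw : w ∈ (q.coeff u • p - p.coeff u • q).support) : lt w u := by
  classical
  have hwu : w ≠ u := by
    rintro rfl
    simp [coeff_smul, mul_comm] at hw
  rcases Finset.mem_union.1 (support_sub _ _ _ hw) with hw | hw
  exacts [hp.2 w (support_smul hw) hwu, hq.2 w (support_smul hw) hwu]

theorem CHom.smul (hp : CHom c p) (a : K) : CHom c (a • p) :=
  fun w hw w' hw' => hp w (support_smul hw) w' (support_smul hw')

theorem CHom.sub (hp : CHom c p) (hq : CHom c q) (hup : u ∈ p.support) (huq : u ∈ q.support) :
    CHom c (p - q) := by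
  classical
  have hu : ∀ w ∈ (p - q).support, SameDeg c w u := fun w hw =>
    (Finset.mem_union.1 (support_sub _ p q hw)).elim (hp w · u hup) (hq w · u huq)
  intro w hw w' hw'
  obtain ⟨ℓ, hd⟩ := hu w' hw'
  exact (hu w hw).trans ⟨-ℓ, hd.symm⟩

end Polynomial

namespace OppLead

variable {n : ℕ} {K : Type*} [Field K] {c : Fin n → ℤ}
  {lt lt' : (Fin n →₀ ℕ) → (Fin n →₀ ℕ) → Prop} {I : Ideal (MvPolynomial (Fin n) K)}
  {u v w : Fin n →₀ ℕ}

theorem mem_mon_initialIdeal (h : OppLead c lt lt' I u v) : u ∈ Mon (initialIdeal lt I) :=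
  let ⟨p, hp, _, hpu, _⟩ := h
  Ideal.subset_span ⟨p, hp, u, hpu, rfl⟩

theorem sameDeg (h : OppLead c lt lt' I u v) : SameDeg c u v :=
  let ⟨_, _, hph, hpu, hpv⟩ := h
  hph u hpu.1 v hpv.1

theorem not_lt' (hlt' : IsTermOrder n lt') (h : OppLead c lt lt' I u v) : ¬ lt' v u :=
  let ⟨_, _, _, hpu, hpv⟩ := h
  hpv.not_lt hlt' hpu.1

theorem distRel_nonpos (hlt' : IsTermOrder n lt') (hc' : lt' (cneg c) (cpos c))
    (h : OppLead c lt lt' I u v) {ℓ : ℤ} (hd : DistRel c u v ℓ) : ℓ ≤ 0 :=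
  not_lt.1 fun hℓ => h.not_lt' hlt' ((hlt'.pos_iff_gt_of_distRel hc' hd).1 hℓ)

theorem exists_lt_of_maxOppLead (hlt : IsTermOrder n lt) (hlt' : IsTermOrder n lt')
    (hc : lt (cpos c) (cneg c)) (hc' : lt' (cneg c) (cpos c))
    (h : OppLead c lt lt' I u v) (hmax : MaxOppLead c lt lt' I u w) (hwv : w ≠ v) :
    ∃ u₁, lt u₁ u ∧ OppLead c lt lt' I u₁ v := by
  obtain ⟨p, hp, hph, hpu, hpv⟩ := h
  obtain ⟨⟨q, hq, hqh, hqu, hqw⟩, hwmax⟩ := hmax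
  have hvw : lt v w := (hwmax v ⟨p, hp, hph, hpu, hpv⟩).resolve_left hwv.symm
  have hwv' : lt' w v := by
    obtain ⟨ℓ, hd⟩ := (hph v hpv.1 u hpu.1).trans (hqh u hqu.1 w hqw.1)
    exact (hlt'.pos_iff_gt_of_distRel hc' hd).1 ((hlt.pos_iff_lt_of_distRel hc hd).2 hvw)
  have hqu0 : q.coeff u ≠ 0 := mem_support_iff.1 hqu.1
  have hpu0 : p.coeff u ≠ 0 := mem_support_iff.1 hpu.1
  set r := q.coeff u • p - p.coeff u • q
  have hrv : IsLeadExp lt' r v := (hpv.smul hqu0).sub_of_forall_lt hlt' fun x hx =>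
    ((hqw.eq_or_lt (support_smul hx)).elim (· ▸ hwv') (hlt'.trans · hwv'))
  obtain ⟨u₁, hru₁⟩ := hlt.exists_isLeadExp (ne_zero_iff.2 ⟨v, mem_support_iff.1 hrv.1⟩)
  refine ⟨u₁, hpu.lt_of_mem_support_cancel hqu hru₁.1,
    r, I.sub_mem (I.smul_of_tower_mem _ hp) (I.smul_of_tower_mem _ hq), ?_, hru₁, hrv⟩
  exact (hph.smul _).sub (hqh.smul _) (u := u) (by rw [support_smul_eq hqu0]; exact hpu.1)
    (by rw [support_smul_eq hpu0]; exact hqu.1)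

theorem exists_maxOppLead_eq (hlt : IsTermOrder n lt) (hlt' : IsTermOrder n lt')
    (hc : lt (cpos c) (cneg c)) (hc' : lt' (cneg c) (cpos c)) {f : (Fin n →₀ ℕ) → (Fin n →₀ ℕ)}
    (hf : ∀ u ∈ Mon (initialIdeal lt I), MaxOppLead c lt lt' I u (f u))
    (h : OppLead c lt lt' I u v) :
    ∃ ut ∈ Mon (initialIdeal lt I), (ut = u ∨ lt ut u) ∧ f ut = v := by
  suffices key : ∀ k : ℕ, ∀ u, OppLead c lt lt' I u v → DistRel c u v (-k) →
      ∃ ut ∈ Mon (initialIdeal lt I), (ut = u ∨ lt ut u) ∧ f ut = v by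
    obtain ⟨ℓ, hd⟩ := h.sameDeg
    have := h.distRel_nonpos hlt' hc' hd
    obtain ⟨k, rfl⟩ : ∃ k : ℕ, ℓ = -k := ⟨(-ℓ).toNat, by omega⟩
    exact key k u h hd
  intro k
  induction k using Nat.strong_induction_on with
  | _ k ih =>
  intro u h hd
  have hu := h.mem_mon_initialIdeal
  by_cases hfu : f u = v
  · exact ⟨u, hu, Or.inl rfl, hfu⟩
  obtain ⟨u₁, hu₁u, h₁⟩ := h.exists_lt_of_maxOppLead hlt hlt' hc hc' (hf u hu) hfu
  obtain ⟨ℓ₁, hd₁⟩ := h₁.sameDeg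
  have hℓ₁ := (hlt.pos_iff_lt_of_distRel hc (hd₁.sub hd)).2 hu₁u
  have := h₁.distRel_nonpos hlt' hc' hd₁
  obtain ⟨k₁, rfl⟩ : ∃ k₁ : ℕ, ℓ₁ = -k₁ := ⟨(-ℓ₁).toNat, by omega⟩
  obtain ⟨ut, hut, hle, hfut⟩ := ih k₁ (by omega) u₁ h₁ hd₁
  exact ⟨ut, hut, Or.inr (hle.elim (· ▸ hu₁u) (hlt.trans · hu₁u)), hfut⟩

end OppLead

theorem abs_le_abs_of_distRel {n : ℕ} {c : Fin n → ℤ}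
    {lt lt' : (Fin n →₀ ℕ) → (Fin n →₀ ℕ) → Prop} (hlt : IsTermOrder n lt)
    (hlt' : IsTermOrder n lt') (hc : lt (cpos c) (cneg c)) (hc' : lt' (cneg c) (cpos c))
    {u ut v : Fin n →₀ ℕ} {ℓ ℓ' : ℤ} (hv : ¬ lt' v ut) (hu : ¬ lt u ut)
    (hd : DistRel c ut v ℓ) (hd' : DistRel c u v ℓ') : |ℓ| ≤ |ℓ'| := by
  have hℓ : ℓ ≤ 0 := not_lt.1 (mt (hlt'.pos_iff_gt_of_distRel hc' hd).1 hv)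
  have hℓℓ' : ℓ' - ℓ ≤ 0 := not_lt.1 (mt (hlt.pos_iff_lt_of_distRel hc (hd'.sub hd)).1 hu)
  rw [abs_of_nonpos hℓ]
  exact (neg_le_neg (by omega : ℓ' ≤ ℓ)).trans (neg_le_abs ℓ')

theorem exists_smaller_with_maxOppLead_general {n : ℕ} {K : Type*} [Field K] (c : Fin n → ℤ)
    (lt lt' : (Fin n →₀ ℕ) → (Fin n →₀ ℕ) → Prop)
    (hlt : IsTermOrder n lt) (hlt' : IsTermOrder n lt')
    (hlo : lt (cpos c) (cneg c)) (hlo' : lt' (cneg c) (cpos c))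
    (I : Ideal (MvPolynomial (Fin n) K))
    (M : Ideal (MvPolynomial (Fin n) K))
    (hM : M = initialIdeal lt I)
    (f : (Fin n →₀ ℕ) → (Fin n →₀ ℕ))
    (hf : ∀ u ∈ Mon M, MaxOppLead c lt lt' I u (f u))
    (p : MvPolynomial (Fin n) K) (hp : p ∈ I) (hph : CHom c p)
    (u v : Fin n →₀ ℕ) (hpu : IsLeadExp lt p u) (hpv : IsLeadExp lt' p v) :
    ∃ ut ∈ Mon M, (ut = u ∨ lt ut u) ∧ f ut = v ∧
      ∀ ℓ ℓ' : ℤ, DistRel c ut v ℓ → DistRel c u v ℓ' → |ℓ| ≤ |ℓ'| := by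
  subst hM
  obtain ⟨ut, hut, hle, hfut⟩ :=
    OppLead.exists_maxOppLead_eq hlt hlt' hlo hlo' hf ⟨p, hp, hph, hpu, hpv⟩
  have hut_v : OppLead c lt lt' I ut v := hfut ▸ (hf ut hut).1
  have hu : ¬ lt u ut := by
    rcases hle with rfl | hle
    exacts [hlt.irrefl ut, hlt.asymm hle]
  exact ⟨ut, hut, hle, hfut, fun ℓ ℓ' hd hd' =>
    abs_le_abs_of_distRel hlt hlt' hlo hlo' (hut_v.not_lt' hlt') hu hd hd'⟩

/-- (Fact (†) in the proof of Proposition 3.2.) If `f` is the map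
`m ↦ max_≺ { in_≺'(p) : p ∈ I homogeneous, in_≺(p) = m }`, and `p ∈ I` is homogeneous
with `in_≺(p) = x^u` and `in_≺'(p) = x^v`, then there is `x^ũ ∈ Mon M` with `ũ ⪯ u` and
`f(ũ) = v`; in particular `d(ũ, v) ≤ d(u, v)`. -/
theorem exists_smaller_with_maxOppLead {n : ℕ} {K : Type*} [Field K] (c : Fin n → ℤ)
    (hcp : cpos c ≠ 0) (hcn : cneg c ≠ 0)
    (lt lt' : (Fin n →₀ ℕ) → (Fin n →₀ ℕ) → Prop)
    (hlt : IsTermOrder n lt) (hlt' : IsTermOrder n lt')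
    (hlo : lt (cpos c) (cneg c)) (hlo' : lt' (cneg c) (cpos c))
    (I : Ideal (MvPolynomial (Fin n) K)) (hI : CHomIdeal c I)
    (M N : Ideal (MvPolynomial (Fin n) K))
    (hM : M = initialIdeal lt I) (hN : N = initialIdeal lt' I)
    (f : (Fin n →₀ ℕ) → (Fin n →₀ ℕ))
    (hf : ∀ u ∈ Mon M, MaxOppLead c lt lt' I u (f u))
    (p : MvPolynomial (Fin n) K) (hp : p ∈ I) (hph : CHom c p)
    (u v : Fin n →₀ ℕ) (hpu : IsLeadExp lt p u) (hpv : IsLeadExp lt' p v) :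
    ∃ ut ∈ Mon M, (ut = u ∨ lt ut u) ∧ f ut = v ∧
      ∀ ℓ ℓ' : ℤ, DistRel c ut v ℓ → DistRel c u v ℓ' → |ℓ| ≤ |ℓ'| :=
  exists_smaller_with_maxOppLead_general c lt lt' hlt hlt' hlo hlo' I M hM f hf p hp hph u v hpu hpv
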